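/- arXiv:2310.06323 — 8 statements merged into one kernel-verified Lean document; each statement's English description precedes it below -/
import Mathlib

section
/- Let C be a neural code on n neurons, let q be the map adding a trivial on neuron, q(σ) = ι(σ) ∪ {Fin.last n}, and let C' = {q(σ) | σ ∈ C}. Then for every σ ∈ Δ(C), the link of q(σ) in Δ(C') equals the image under ι of the link of σ in Δ(C), i.e., Lk_{q(σ)}(Δ(C')) = {ι(ω) | ω ∈ Lk_σ(Δ(C))}. -/
/-- The simplicial complex of a neural code. -/
def simComp {V : Type*} (C : Set (Finset V)) : Set (Finset V) := {α | ∃ β ∈ C, α ⊆ β}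

/-- The link of `σ` in a family `K`. -/
def link {V : Type*} [DecidableEq V] (σ : Finset V) (K : Set (Finset V)) : Set (Finset V) :=
  {ω ∈ K | ω ∩ σ = ∅ ∧ ω ∪ σ ∈ K}

/-- The map sending `α ⊆ Fin n` to its image in `Fin (n+1)` under `Fin.castSucc`. -/
def iota {n : ℕ} (α : Finset (Fin n)) : Finset (Fin (n+1)) := α.image Fin.castSucc

/-- Adding a trivial "on" neuron. -/
def addOn {n : ℕ} (σ : Finset (Fin n)) : Finset (Fin (n+1)) := iota σ ∪ {Fin.last n}

/-!
For injective `f` and `a ∉ range f`, the map `s ↦ f(s) ∪ {a}` is an order embedding sending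
`ω ∪ σ` to `f(ω) ∪ (f(σ) ∪ {a})`, so the conditions defining the two links correspond under `f`.
Conversely, a face of the link of `f(σ) ∪ {a}` is disjoint from it, hence avoids `a`, and so is
the image under `f` of a face of `Δ(C)`.
-/

open Finset Function

section Cone

variable {V W : Type*} [DecidableEq W] {f : V → W} {a : W}

lemma image_subset_image_union_singleton_iff (hf : Injective f) (ha : ∀ v, f v ≠ a)
    {s t : Finset V} : s.image f ⊆ t.image f ∪ {a} ↔ s ⊆ t := by
  simp [subset_iff, hf.eq_iff, ha]

lemma image_union_singleton_subset_iff (hf : Injective f) (ha : ∀ v, f v ≠ a)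
    {s t : Finset V} : s.image f ∪ {a} ⊆ t.image f ∪ {a} ↔ s ⊆ t := by
  simp [subset_iff, hf.eq_iff, ha]

lemma image_inter_image_union_singleton_eq_empty_iff [DecidableEq V] (hf : Injective f)
    (ha : ∀ v, f v ≠ a) {s t : Finset V} : s.image f ∩ (t.image f ∪ {a}) = ∅ ↔ s ∩ t = ∅ := by
  simp [← disjoint_iff_inter_eq_empty, disjoint_image hf, ha]

lemma image_union_image_union_singleton [DecidableEq V] (s t : Finset V) :
    s.image f ∪ (t.image f ∪ {a}) = (s ∪ t).image f ∪ {a} := by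
  rw [image_union, union_assoc]

lemma image_mem_link_iff [DecidableEq V] (hf : Injective f) (ha : ∀ v, f v ≠ a)
    {C : Set (Finset V)} {σ ω : Finset V} :
    ω.image f ∈ link (σ.image f ∪ {a}) (simComp ((fun s => s.image f ∪ {a}) '' C)) ↔
      ω ∈ link σ (simComp C) := by
  simp only [link, simComp, Set.mem_ofPred_eq, Set.exists_mem_image,
    image_subset_image_union_singleton_iff hf ha, image_union_image_union_singleton,
    image_union_singleton_subset_iff hf ha, image_inter_image_union_singleton_eq_empty_iff hf ha]

lemma link_image_union_singleton [DecidableEq V] (hf : Injective f) (ha : ∀ v, f v ≠ a)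
    (C : Set (Finset V)) (σ : Finset V) :
    link (σ.image f ∪ {a}) (simComp ((fun s => s.image f ∪ {a}) '' C)) =
      image f '' link σ (simComp C) := by
  ext ω
  constructor
  · intro hω
    obtain ⟨_, ⟨β, -, rfl⟩, hωβ⟩ := hω.1
    have haω : a ∉ ω := fun haω =>
      notMem_empty a (hω.2.1 ▸ mem_inter.2 ⟨haω, mem_union_right _ (mem_singleton_self a)⟩)
    dsimp only at hωβ
    rw [union_comm, ← insert_eq, subset_insert_iff_of_notMem haω, subset_image_iff] at hωβ
    obtain ⟨ω, -, rfl⟩ := hωβ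
    exact ⟨ω, (image_mem_link_iff hf ha).1 hω, rfl⟩
  · rintro ⟨ω, hω, rfl⟩
    exact (image_mem_link_iff hf ha).2 hω

end Cone

theorem stmt_6_general (n : ℕ) (C : Set (Finset (Fin n)))
    (C' : Set (Finset (Fin (n+1)))) (hC' : C' = addOn '' C)
    (σ : Finset (Fin n)) :
    link (addOn σ) (simComp C') = iota '' link σ (simComp C) := by
  subst hC'
  exact link_image_union_singleton (Fin.castSucc_injective n) Fin.castSucc_ne_last C σ

theorem stmt_6 (n : ℕ) (C : Set (Finset (Fin n)))
    (C' : Set (Finset (Fin (n+1)))) (hC' : C' = addOn '' C)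
    (σ : Finset (Fin n)) (hσ : σ ∈ simComp C) :
    link (addOn σ) (simComp C') = iota '' link σ (simComp C) :=
  stmt_6_general n C C' hC' σ
end

section
/- Let k be a field, let C be a neural code on n neurons, let q be the map adding a trivial on neuron, q(σ) = ι(σ) ∪ {Fin.last n}, and let C' = {q(σ) | σ ∈ C}. Then the ring homomorphism MvPolynomial (Fin n) k → MvPolynomial (Fin (n+1)) k determined by X i ↦ X (Fin.castSucc i) maps the Stanley–Reisner ideal I_{Δ(C)} into I_{Δ(C')}, and the induced ring homomorphism (MvPolynomial (Fin n) k)/I_{Δ(C)} → (MvPolynomial (Fin (n+1)) k)/I_{Δ(C')} is injective. -/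
/-- The Stanley–Reisner ideal of a family of finite subsets of `Fin m`. -/
noncomputable def SRideal (k : Type*) [Field k] {m : ℕ} (K : Set (Finset (Fin m))) :
    Ideal (MvPolynomial (Fin m) k) :=
  Ideal.span {p | ∃ τ : Finset (Fin m), τ ∉ K ∧ p = ∏ i ∈ τ, MvPolynomial.X i}

open MvPolynomial in
theorem stmt_7 (k : Type*) [Field k] (n : ℕ) (C : Set (Finset (Fin n)))
    (C' : Set (Finset (Fin (n+1)))) (hC' : C' = addOn '' C) :
    ∃ h : SRideal k (simComp C) ≤
        Ideal.comap
          ((MvPolynomial.rename (Fin.castSucc (n := n))).toRingHom :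
            MvPolynomial (Fin n) k →+* MvPolynomial (Fin (n+1)) k)
          (SRideal k (simComp C')),
      Function.Injective
        (Ideal.quotientMap (SRideal k (simComp C'))
          ((MvPolynomial.rename (Fin.castSucc (n := n))).toRingHom) h) := by
  subst hC'
  set f : Fin (n+1) → MvPolynomial (Fin n) k := Fin.lastCases 1 MvPolynomial.X with hf
  have key1 : SRideal k (simComp C) ≤
      Ideal.comap ((rename (Fin.castSucc (n := n))).toRingHom :
        MvPolynomial (Fin n) k →+* MvPolynomial (Fin (n+1)) k)
        (SRideal k (simComp (addOn '' C))) := by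
    rw [SRideal, Ideal.span_le]
    rintro p ⟨τ, hτ, rfl⟩
    simp only [SetLike.mem_coe, Ideal.mem_comap]
    apply Ideal.subset_span
    refine ⟨τ.image Fin.castSucc, ?_, ?_⟩
    · rintro ⟨β, ⟨σ, hσ, rfl⟩, hsub⟩
      refine hτ ⟨σ, hσ, fun i hi => ?_⟩
      have := hsub (Finset.mem_image_of_mem _ hi)
      simp only [addOn, iota, Finset.mem_union, Finset.mem_singleton,
        Finset.mem_image] at this
      rcases this with (⟨j, hj, hji⟩ | h)
      · rwa [Fin.castSucc_inj.mp hji] at hj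
      · exact absurd h (Fin.castSucc_lt_last i).ne
    · rw [AlgHom.toRingHom_eq_coe, RingHom.coe_coe, map_prod,
        Finset.prod_image (fun a _ b _ h => Fin.castSucc_inj.mp h)]
      simp [rename_X]
  have keymap : Ideal.map ((aeval f : MvPolynomial (Fin (n+1)) k →ₐ[k] MvPolynomial (Fin n) k) :
      MvPolynomial (Fin (n+1)) k →+* MvPolynomial (Fin n) k)
      (SRideal k (simComp (addOn '' C))) ≤ SRideal k (simComp C) := by
    rw [Ideal.map_le_iff_le_comap, SRideal, Ideal.span_le]
    rintro p ⟨τ', hτ', rfl⟩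
    simp only [SetLike.mem_coe, Ideal.mem_comap]
    set τ : Finset (Fin n) := Finset.univ.filter (fun i => Fin.castSucc i ∈ τ') with hτdef
    have himg : τ'.erase (Fin.last n) = τ.image Fin.castSucc := by
      ext j
      simp only [hτdef, Finset.mem_erase, Finset.mem_image, Finset.mem_filter,
        Finset.mem_univ, true_and]
      constructor
      · rintro ⟨hne, hj⟩
        obtain ⟨i, rfl⟩ := Fin.exists_castSucc_eq.mpr hne
        exact ⟨i, hj, rfl⟩
      · rintro ⟨i, hi, rfl⟩
        exact ⟨(Fin.castSucc_lt_last i).ne, hi⟩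
    have hprod : (aeval f) (∏ j ∈ τ', (X j : MvPolynomial (Fin (n+1)) k)) = ∏ i ∈ τ, X i := by
      rw [map_prod]
      simp only [aeval_X]
      rw [← Finset.prod_erase τ' (show f (Fin.last n) = 1 by simp [hf]), himg,
        Finset.prod_image (fun a _ b _ h => Fin.castSucc_inj.mp h)]
      exact Finset.prod_congr rfl fun i _ => by simp [hf]
    show (aeval f) (∏ j ∈ τ', (X j : MvPolynomial (Fin (n+1)) k)) ∈ SRideal k (simComp C)
    rw [hprod]
    apply Ideal.subset_span
    refine ⟨τ, ?_, rfl⟩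
    rintro ⟨σ, hσ, hsub⟩
    refine hτ' ⟨addOn σ, ⟨σ, hσ, rfl⟩, fun j hj => ?_⟩
    rcases eq_or_ne j (Fin.last n) with rfl | hne
    · simp [addOn]
    · obtain ⟨i, rfl⟩ := Fin.exists_castSucc_eq.mpr hne
      have hi : i ∈ τ := by simp [hτdef, hj]
      simp only [addOn, iota, Finset.mem_union, Finset.mem_image]
      exact Or.inl ⟨i, hsub hi, rfl⟩
  have key2 : Ideal.comap ((rename (Fin.castSucc (n := n))).toRingHom :
      MvPolynomial (Fin n) k →+* MvPolynomial (Fin (n+1)) k)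
      (SRideal k (simComp (addOn '' C))) ≤ SRideal k (simComp C) := by
    intro p hp
    have h2 := keymap (Ideal.mem_map_of_mem _ hp)
    have h3 : (aeval f) ((rename Fin.castSucc) p) ∈ SRideal k (simComp C) := h2
    rwa [aeval_rename,
      show (f ∘ Fin.castSucc) = X from funext fun i => by simp [hf],
      aeval_X_left_apply] at h3
  exact ⟨key1, Ideal.quotientMap_injective' key2⟩
end

section
/- Let C be a neural code on n neurons, let q be the map duplicating the first neuron, q(σ) = ι(σ) ∪ {Fin.last n} if (0 : Fin n) ∈ σ and q(σ) = ι(σ) otherwise, and let C' = {q(σ) | σ ∈ C}. If α : Finset (Fin n) is such that q(α) ∈ Δ(C'), then α ∈ Δ(C); in particular q(α) ∈ {q(β) | β ∈ Δ(C)}. -/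
/-- Duplicating the first neuron. -/
def dup {n : ℕ} [NeZero n] (σ : Finset (Fin n)) : Finset (Fin (n+1)) :=
  if (0 : Fin n) ∈ σ then iota σ ∪ {Fin.last n} else iota σ

lemma iota_subset_dup {n : ℕ} [NeZero n] (σ : Finset (Fin n)) : iota σ ⊆ dup σ := by
  unfold dup
  split
  · exact Finset.subset_union_left
  · exact subset_rfl

theorem stmt_10 (n : ℕ) [NeZero n] (C : Set (Finset (Fin n)))
    (C' : Set (Finset (Fin (n+1)))) (hC' : C' = dup '' C)
    (α : Finset (Fin n)) (hα : dup α ∈ simComp C') :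
    α ∈ simComp C ∧ dup α ∈ dup '' simComp C := by
  obtain ⟨γ, hγ, hsub⟩ := hα
  rw [hC'] at hγ
  obtain ⟨β, hβ, rfl⟩ := hγ
  have hαβ : α ⊆ β := by
    intro x hx
    have h1 : (Fin.castSucc x) ∈ dup β :=
      hsub (iota_subset_dup α (Finset.mem_image_of_mem _ hx))
    have h2 : (Fin.castSucc x) ∈ iota β := by
      unfold dup at h1
      split at h1
      · rcases Finset.mem_union.mp h1 with h | h
        · exact h
        · exact absurd (Finset.mem_singleton.mp h) (Fin.castSucc_lt_last x).ne
      · exact h1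
    obtain ⟨y, hy, hyx⟩ := Finset.mem_image.mp h2
    rwa [Fin.castSucc_inj.mp hyx] at hy
  exact ⟨⟨β, hβ, hαβ⟩, ⟨α, ⟨β, hβ, hαβ⟩, rfl⟩⟩
end

section
/- Let C be a neural code on n neurons, let q be the map duplicating the first neuron, q(σ) = ι(σ) ∪ {Fin.last n} if (0 : Fin n) ∈ σ and q(σ) = ι(σ) otherwise, and let C' = {q(σ) | σ ∈ C}. Let α : Finset (Fin n). If either (i) ι(α) ∪ {Fin.last n} ∈ Δ(C'), or (ii) ι(α) ∈ Δ(C') and (0 : Fin n) ∈ α, then {Fin.castSucc 0} ∪ ι(α) ∪ {Fin.last n} ∈ Δ(C'). -/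
theorem stmt_11 (n : ℕ) [NeZero n] (C : Set (Finset (Fin n)))
    (C' : Set (Finset (Fin (n+1)))) (hC' : C' = dup '' C)
    (α : Finset (Fin n))
    (h : iota α ∪ {Fin.last n} ∈ simComp C' ∨
         (iota α ∈ simComp C' ∧ (0 : Fin n) ∈ α)) :
    {Fin.castSucc (0 : Fin n)} ∪ iota α ∪ {Fin.last n} ∈ simComp C' := by
  subst hC'
  have hne : (Fin.castSucc (0 : Fin n)) ≠ Fin.last n := (Fin.castSucc_lt_last _).ne
  rcases h with ⟨β, ⟨σ, hσC, rfl⟩, hsub⟩ | ⟨⟨β, ⟨σ, hσC, rfl⟩, hsub⟩, h0⟩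
  · have hlast : Fin.last n ∈ dup σ :=
      hsub (Finset.mem_union_right _ (Finset.mem_singleton_self _))
    have h0σ : (0 : Fin n) ∈ σ := by
      by_contra h0
      simp only [dup, h0, if_false, iota, Finset.mem_image] at hlast
      obtain ⟨x, _, hx⟩ := hlast
      exact (Fin.castSucc_lt_last x).ne hx
    refine ⟨dup σ, ⟨σ, hσC, rfl⟩, ?_⟩
    intro x hx
    simp only [Finset.mem_union, Finset.mem_singleton] at hx
    rcases hx with (rfl | hx) | rfl
    · simp only [dup, h0σ, if_true, Finset.mem_union, iota, Finset.mem_image]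
      exact Or.inl ⟨0, h0σ, rfl⟩
    · exact hsub (Finset.mem_union_left _ hx)
    · exact hsub (Finset.mem_union_right _ (Finset.mem_singleton_self _))
  · have hc0 : Fin.castSucc (0 : Fin n) ∈ dup σ := by
      refine hsub ?_
      simp only [iota, Finset.mem_image]
      exact ⟨0, h0, rfl⟩
    have h0σ : (0 : Fin n) ∈ σ := by
      have hι : Fin.castSucc (0 : Fin n) ∈ iota σ := by
        by_cases hh : (0 : Fin n) ∈ σ
        · rw [dup, if_pos hh] at hc0
          rcases Finset.mem_union.mp hc0 with h | h
          · exact h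
          · exact absurd (Finset.mem_singleton.mp h) hne
        · rwa [dup, if_neg hh] at hc0
      simp only [iota, Finset.mem_image] at hι
      obtain ⟨x, hxσ, hx⟩ := hι
      rwa [Fin.castSucc_injective _ hx] at hxσ
    refine ⟨dup σ, ⟨σ, hσC, rfl⟩, ?_⟩
    intro x hx
    simp only [Finset.mem_union, Finset.mem_singleton] at hx
    rcases hx with (rfl | hx) | rfl
    · exact hc0
    · exact hsub hx
    · simp [dup, h0σ]
end

section
/- Let C be a neural code on n neurons, let q be the map duplicating the first neuron, q(σ) = ι(σ) ∪ {Fin.last n} if (0 : Fin n) ∈ σ and q(σ) = ι(σ) otherwise, and let C' = {q(σ) | σ ∈ C}. Let σ ∈ Δ(C) with (0 : Fin n) ∉ σ, and suppose there exists ω ∈ Lk_σ(Δ(C)) with (0 : Fin n) ∈ ω. Then: (i) every facet of Lk_{q(σ)}(Δ(C')) that contains Fin.last n also contains Fin.castSucc 0; and (ii) the set of elements of Lk_{q(σ)}(Δ(C')) not containing Fin.last n equals {ι(ω) | ω ∈ Lk_σ(Δ(C))}. -/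
/-- A facet of a family is a maximal element under inclusion. -/
def IsFacet {V : Type*} (K : Set (Finset V)) (τ : Finset V) : Prop :=
  τ ∈ K ∧ ∀ β ∈ K, τ ⊆ β → τ = β

namespace Aux13

variable {n : ℕ} [NeZero n]

lemma iota_inj : Function.Injective (iota (n := n)) :=
  fun _ _ h => Finset.image_injective (Fin.castSucc_injective n) h

lemma last_notMem_iota (α : Finset (Fin n)) : Fin.last n ∉ iota α := by
  simp only [iota, Finset.mem_image]
  rintro ⟨x, -, h⟩
  exact absurd h (Fin.castSucc_lt_last x).ne

lemma iota_subset_dup (β : Finset (Fin n)) : iota β ⊆ dup β := by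
  unfold dup; split
  · exact Finset.subset_union_left
  · exact subset_rfl

lemma dup_subset (β : Finset (Fin n)) : dup β ⊆ iota β ∪ {Fin.last n} := by
  unfold dup; split
  · exact subset_rfl
  · exact Finset.subset_union_left

lemma iota_mono {a b : Finset (Fin n)} (h : a ⊆ b) : iota a ⊆ iota b :=
  Finset.image_subset_image h

lemma iota_union (a b : Finset (Fin n)) : iota (a ∪ b) = iota a ∪ iota b :=
  Finset.image_union _ _

lemma iota_inter (a b : Finset (Fin n)) : iota (a ∩ b) = iota a ∩ iota b :=
  Finset.image_inter _ _ (Fin.castSucc_injective n)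

lemma mem_simComp_iota {C : Set (Finset (Fin n))} {γ : Finset (Fin n)} :
    iota γ ∈ simComp (dup '' C) ↔ γ ∈ simComp C := by
  constructor
  · rintro ⟨β', ⟨β, hβ, rfl⟩, hsub⟩
    refine ⟨β, hβ, fun x hx => ?_⟩
    have hx' : (Fin.castSucc x) ∈ dup β := hsub (Finset.mem_image_of_mem _ hx)
    have := dup_subset β hx'
    rcases Finset.mem_union.1 this with h | h
    · rcases Finset.mem_image.1 h with ⟨y, hy, hxy⟩
      rwa [← Fin.castSucc_injective n hxy]
    · exact absurd (Finset.mem_singleton.1 h) (Fin.castSucc_lt_last x).ne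
  · rintro ⟨β, hβ, hsub⟩
    exact ⟨dup β, ⟨β, hβ, rfl⟩, (iota_mono hsub).trans (iota_subset_dup β)⟩

lemma exists_iota_eq {C : Set (Finset (Fin n))} {α' : Finset (Fin (n+1))}
    (h : α' ∈ simComp (dup '' C)) (hl : Fin.last n ∉ α') :
    ∃ ω : Finset (Fin n), iota ω = α' := by
  rcases h with ⟨β', ⟨β, hβ, rfl⟩, hsub⟩
  have hsub' : α' ⊆ iota β := by
    intro x hx
    rcases Finset.mem_union.1 (dup_subset β (hsub hx)) with h | h
    · exact h
    · exact absurd hx (by rw [Finset.mem_singleton.1 h]; exact hl)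
  rcases Finset.subset_image_iff.1 hsub' with ⟨ω, _, hω⟩
  exact ⟨ω, hω⟩

lemma castSucc_zero_mem_dup {β : Finset (Fin n)} (h : Fin.last n ∈ dup β) :
    Fin.castSucc (0 : Fin n) ∈ dup β := by
  unfold dup at *
  split at h
  · next h0 =>
    simp only [if_pos h0]
    exact Finset.mem_union_left _ (Finset.mem_image_of_mem _ h0)
  · exact absurd h (last_notMem_iota β)

end Aux13

theorem stmt_13 (n : ℕ) [NeZero n] (C : Set (Finset (Fin n)))
    (C' : Set (Finset (Fin (n+1)))) (hC' : C' = dup '' C)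
    (σ : Finset (Fin n)) (hσ : σ ∈ simComp C) (h0 : (0 : Fin n) ∉ σ)
    (hω : ∃ ω ∈ link σ (simComp C), (0 : Fin n) ∈ ω) :
    (∀ τ' : Finset (Fin (n+1)), IsFacet (link (dup σ) (simComp C')) τ' →
        Fin.last n ∈ τ' → Fin.castSucc (0 : Fin n) ∈ τ') ∧
    {α' ∈ link (dup σ) (simComp C') | Fin.last n ∉ α'} =
      iota '' link σ (simComp C) := by
  subst hC'
  open Aux13 in
  have hdσ : dup σ = iota σ := by simp [dup, h0]
  have hc0σ : Fin.castSucc (0 : Fin n) ∉ iota σ := by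
    simp only [iota, Finset.mem_image]
    rintro ⟨y, hy, hxy⟩
    exact h0 (Fin.castSucc_injective n hxy ▸ hy)
  constructor
  · rintro τ' ⟨hτmem, hτmax⟩ hlast
    rw [hdσ] at hτmem hτmax
    obtain ⟨hτK, hτint, hτun⟩ := hτmem
    -- show τ' ∪ {castSucc 0} is in the link
    set τ'' := insert (Fin.castSucc (0 : Fin n)) τ' with hτ''
    have hτ''K : τ'' ∈ simComp (dup '' C) := by
      rcases hτK with ⟨β', ⟨β, hβ, rfl⟩, hsub⟩
      refine ⟨dup β, ⟨β, hβ, rfl⟩, Finset.insert_subset ?_ hsub⟩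
      exact Aux13.castSucc_zero_mem_dup (hsub hlast)
    have hτ''int : τ'' ∩ iota σ = ∅ := by
      rw [Finset.insert_inter_of_notMem hc0σ, hτint]
    have hτ''un : τ'' ∪ iota σ ∈ simComp (dup '' C) := by
      rcases hτun with ⟨β', ⟨β, hβ, rfl⟩, hsub⟩
      refine ⟨dup β, ⟨β, hβ, rfl⟩, ?_⟩
      rw [hτ'', Finset.insert_union]
      refine Finset.insert_subset ?_ hsub
      exact Aux13.castSucc_zero_mem_dup (hsub (Finset.mem_union_left _ hlast))
    have := hτmax τ'' ⟨hτ''K, hτ''int, hτ''un⟩ (Finset.subset_insert _ _)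
    rw [this]
    exact Finset.mem_insert_self _ _
  · ext α'
    simp only [Set.mem_setOf_eq, Set.mem_image]
    constructor
    · rintro ⟨⟨hK, hint, hun⟩, hl⟩
      rw [hdσ] at hint hun
      rcases Aux13.exists_iota_eq hK hl with ⟨ω, rfl⟩
      refine ⟨ω, ⟨Aux13.mem_simComp_iota.1 hK, ?_, ?_⟩, rfl⟩
      · apply Aux13.iota_inj
        rw [Aux13.iota_inter, hint]
        simp [iota]
      · exact Aux13.mem_simComp_iota.1 (by rwa [Aux13.iota_union])
    · rintro ⟨ω, ⟨hK, hint, hun⟩, rfl⟩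
      refine ⟨⟨Aux13.mem_simComp_iota.2 hK, ?_, ?_⟩, Aux13.last_notMem_iota ω⟩
      · rw [hdσ, ← Aux13.iota_inter, hint]; simp [iota]
      · rw [hdσ, ← Aux13.iota_union]; exact Aux13.mem_simComp_iota.2 hun
end

section
/- Let k be a field, let C be a neural code on n neurons, let q be the map duplicating the first neuron, q(σ) = ι(σ) ∪ {Fin.last n} if (0 : Fin n) ∈ σ and q(σ) = ι(σ) otherwise, and let C' = {q(σ) | σ ∈ C}. Then the ring homomorphism MvPolynomial (Fin n) k → MvPolynomial (Fin (n+1)) k determined by X i ↦ X (Fin.castSucc i) maps the Stanley–Reisner ideal I_{Δ(C)} into I_{Δ(C')}, and the induced ring homomorphism (MvPolynomial (Fin n) k)/I_{Δ(C)} → (MvPolynomial (Fin (n+1)) k)/I_{Δ(C')} is injective. -/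
/-!
Renaming variables along the retraction `undup : Fin (n+1) → Fin n` (`castSucc i ↦ i`,
`last ↦ 0`) is a left inverse of renaming along `castSucc`, and `dup σ` is exactly the preimage
of `σ` under `undup`. Hence a face `τ'` lies in `Δ(C')` iff `undup(τ')` lies in `Δ(C)`, so both
renamings carry non-faces to non-faces and map the Stanley–Reisner ideals into each other; applying
the left inverse shows that `rename castSucc` pulls `I_{Δ(C')}` back exactly to `I_{Δ(C)}`.
-/

open MvPolynomial

theorem Finset.prod_image_dvd_prod_comp {ι κ M : Type*} [CommMonoid M] [DecidableEq κ]
    (s : Finset ι) (f : ι → κ) (g : κ → M) :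
    ∏ j ∈ s.image f, g j ∣ ∏ i ∈ s, g (f i) := by
  rw [Finset.prod_comp g f]
  refine Finset.prod_dvd_prod_of_dvd _ _ fun j hj => dvd_pow_self _ ?_
  obtain ⟨i, hi, rfl⟩ := Finset.mem_image.1 hj
  exact Finset.card_ne_zero_of_mem (Finset.mem_filter.2 ⟨hi, rfl⟩)

theorem map_rename_SRideal_le (k : Type*) [Field k] {m m' : ℕ} (f : Fin m → Fin m')
    {K : Set (Finset (Fin m))} {K' : Set (Finset (Fin m'))}
    (hf : ∀ τ, τ ∉ K → τ.image f ∉ K') :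
    Ideal.map (rename f) (SRideal k K) ≤ SRideal k K' := by
  rw [SRideal, Ideal.map_span, Ideal.span_le]
  rintro _ ⟨_, ⟨τ, hτ, rfl⟩, rfl⟩
  obtain ⟨c, hc⟩ := Finset.prod_image_dvd_prod_comp τ f (X (R := k))
  rw [SetLike.mem_coe, map_prod, Finset.prod_congr rfl fun i _ => rename_X f i, hc]
  exact Ideal.mul_mem_right _ _ (Ideal.subset_span ⟨_, hf τ hτ, rfl⟩)

def undup (n : ℕ) [NeZero n] : Fin (n+1) → Fin n :=
  Fin.lastCases 0 id

section Duplication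

variable {n : ℕ} [NeZero n]

@[simp]
theorem undup_castSucc (i : Fin n) : undup n i.castSucc = i := by
  simp [undup]

@[simp]
theorem undup_last : undup n (Fin.last n) = 0 := by
  simp [undup]

theorem undup_comp_castSucc : undup n ∘ Fin.castSucc = id :=
  funext undup_castSucc

theorem mem_dup_iff {σ : Finset (Fin n)} {j : Fin (n+1)} : j ∈ dup σ ↔ undup n j ∈ σ := by
  rcases Fin.eq_castSucc_or_eq_last j with ⟨i, rfl⟩ | rfl
  · have : i.castSucc ≠ Fin.last n := Fin.castSucc_ne_last i
    by_cases h0 : (0 : Fin n) ∈ σ <;>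
      simp [dup, iota, h0, this, Fin.castSucc_injective n |>.eq_iff]
  · by_cases h0 : (0 : Fin n) ∈ σ <;> simp [dup, iota, h0]

theorem image_undup_mem_simComp_iff (C : Set (Finset (Fin n))) (τ : Finset (Fin (n+1))) :
    τ.image (undup n) ∈ simComp C ↔ τ ∈ simComp (dup '' C) := by
  simp only [simComp, Set.mem_ofPred_eq, Set.exists_mem_image, Finset.image_subset_iff]
  simp only [Finset.subset_iff, mem_dup_iff]

theorem iota_mem_simComp_iff (C : Set (Finset (Fin n))) (τ : Finset (Fin n)) :
    iota τ ∈ simComp (dup '' C) ↔ τ ∈ simComp C := by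
  rw [← image_undup_mem_simComp_iff, iota, Finset.image_image, undup_comp_castSucc,
    Finset.image_id]

end Duplication

theorem stmt_15 (k : Type*) [Field k] (n : ℕ) [NeZero n] (C : Set (Finset (Fin n)))
    (C' : Set (Finset (Fin (n+1)))) (hC' : C' = dup '' C) :
    ∃ h : SRideal k (simComp C) ≤
        Ideal.comap
          ((MvPolynomial.rename (Fin.castSucc (n := n))).toRingHom :
            MvPolynomial (Fin n) k →+* MvPolynomial (Fin (n+1)) k)
          (SRideal k (simComp C')),
      Function.Injective
        (Ideal.quotientMap (SRideal k (simComp C'))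
          ((MvPolynomial.rename (Fin.castSucc (n := n))).toRingHom) h) := by
  subst hC'
  have hle := Ideal.map_le_iff_le_comap.1 <| map_rename_SRideal_le k (Fin.castSucc (n := n))
    fun τ hτ => (iota_mem_simComp_iff C τ).not.2 hτ
  have hretract := map_rename_SRideal_le k (undup n)
    fun τ hτ => (image_undup_mem_simComp_iff C τ).not.2 hτ
  refine ⟨hle, Ideal.quotientMap_injective' fun p hp => ?_⟩
  simpa [rename_rename, undup_comp_castSucc] using hretract (Ideal.mem_map_of_mem _ hp)
end

section
/- Let C be a neural code on n+1 neurons, let q be the projection map deleting the last neuron, q(α) = {i : Fin n | Fin.castSucc i ∈ α}, and let C' = {q(σ) | σ ∈ C}. Then for every σ' ∈ Δ(C'), the link of σ' in Δ(C') equals the image under q of the link of ι(σ') in Δ(C), i.e., Lk_{σ'}(Δ(C')) = {q(ω) | ω ∈ Lk_{ι(σ')}(Δ(C))}. -/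
/-- The projection map deleting the last neuron. -/
def proj {n : ℕ} (α : Finset (Fin (n+1))) : Finset (Fin n) :=
  Finset.univ.filter (fun i => Fin.castSucc i ∈ α)

lemma mem_proj {n : ℕ} {α : Finset (Fin (n+1))} {i : Fin n} :
    i ∈ proj α ↔ Fin.castSucc i ∈ α := by simp [proj]

lemma mem_iota {n : ℕ} {α : Finset (Fin n)} {j : Fin (n+1)} :
    j ∈ iota α ↔ ∃ i ∈ α, Fin.castSucc i = j := by simp [iota]

lemma proj_iota {n : ℕ} (α : Finset (Fin n)) : proj (iota α) = α := by
  ext i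
  simp [mem_proj, mem_iota, Fin.castSucc_inj]

lemma iota_proj_subset {n : ℕ} (β : Finset (Fin (n+1))) : iota (proj β) ⊆ β := by
  intro j hj
  rw [mem_iota] at hj
  obtain ⟨i, hi, rfl⟩ := hj
  exact mem_proj.1 hi

lemma proj_mono {n : ℕ} {α β : Finset (Fin (n+1))} (h : α ⊆ β) : proj α ⊆ proj β := by
  intro i hi; exact mem_proj.2 (h (mem_proj.1 hi))

lemma iota_mono {n : ℕ} {α β : Finset (Fin n)} (h : α ⊆ β) : iota α ⊆ iota β :=
  Finset.image_subset_image h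

lemma proj_union {n : ℕ} (α β : Finset (Fin (n+1))) :
    proj (α ∪ β) = proj α ∪ proj β := by
  ext i; simp [mem_proj]

lemma iota_union {n : ℕ} (α β : Finset (Fin n)) :
    iota (α ∪ β) = iota α ∪ iota β := Finset.image_union _ _

theorem stmt_17 (n : ℕ) (C : Set (Finset (Fin (n+1))))
    (C' : Set (Finset (Fin n))) (hC' : C' = proj '' C)
    (σ' : Finset (Fin n)) (hσ' : σ' ∈ simComp C') :
    link σ' (simComp C') = proj '' link (iota σ') (simComp C) := by
  subst hC'
  ext ω'
  constructor
  · rintro ⟨⟨β', ⟨β, hβ, rfl⟩, hsub⟩, hdisj, γ', ⟨γ, hγ, rfl⟩, hsub2⟩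
    refine ⟨iota ω', ⟨⟨γ, hγ, ?_⟩, ?_, ⟨γ, hγ, ?_⟩⟩, proj_iota ω'⟩
    · exact (iota_mono (Finset.subset_union_left.trans hsub2)).trans (iota_proj_subset γ)
    · ext j
      simp only [Finset.mem_inter, mem_iota, Finset.notMem_empty, iff_false]
      rintro ⟨⟨i, hi, rfl⟩, hj2⟩
      obtain ⟨i', hi', h⟩ := hj2
      rw [Fin.castSucc_inj] at h
      have : i ∈ ω' ∩ σ' := Finset.mem_inter.2 ⟨hi, h ▸ hi'⟩
      simp [hdisj] at this
    · rw [← iota_union]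
      exact (iota_mono hsub2).trans (iota_proj_subset γ)
  · rintro ⟨ω, ⟨⟨β, hβ, hsub⟩, hdisj, γ, hγ, hsub2⟩, rfl⟩
    refine ⟨⟨proj β, ⟨β, hβ, rfl⟩, proj_mono hsub⟩, ?_, ⟨proj γ, ⟨γ, hγ, rfl⟩, ?_⟩⟩
    · ext i
      simp only [Finset.mem_inter, mem_proj, Finset.notMem_empty, iff_false]
      rintro ⟨h1, h2⟩
      have : Fin.castSucc i ∈ ω ∩ iota σ' :=
        Finset.mem_inter.2 ⟨h1, mem_iota.2 ⟨i, h2, rfl⟩⟩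
      simp [hdisj] at this
    · have : proj ω ∪ σ' = proj (ω ∪ iota σ') := by rw [proj_union, proj_iota]
      rw [this]
      exact proj_mono hsub2
end

section
/- Let C be a neural code on n+1 neurons, let q be the projection map deleting the last neuron, q(α) = {i : Fin n | Fin.castSucc i ∈ α}, and let C' = {q(σ) | σ ∈ C}. Suppose σ' ∈ Δ(C') and ι(σ') ∪ {Fin.last n} ∉ Δ(C). Then every element of Lk_{ι(σ')}(Δ(C)) does not contain Fin.last n, and Lk_{ι(σ')}(Δ(C)) = {ι(ω') | ω' ∈ Lk_{σ'}(Δ(C'))}. -/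
lemma simComp_down {V : Type*} (C : Set (Finset V)) {α β : Finset V} (h : α ⊆ β)
    (hb : β ∈ simComp C) : α ∈ simComp C := by
  obtain ⟨γ, hγ, hbγ⟩ := hb; exact ⟨γ, hγ, h.trans hbγ⟩

lemma mem_iota_iff {n : ℕ} (α : Finset (Fin n)) (i : Fin n) :
    Fin.castSucc i ∈ iota α ↔ i ∈ α := by
  simp [iota, Fin.castSucc_inj]

lemma iota_proj {n : ℕ} {ω : Finset (Fin (n+1))} (h : Fin.last n ∉ ω) :
    iota (proj ω) = ω := by
  ext a
  refine Fin.lastCases ?_ ?_ a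
  · simp [iota, h, fun i => (Fin.castSucc_lt_last i).ne]
  · intro i
    rw [mem_iota_iff]
    simp [proj]

theorem stmt_19 (n : ℕ) (C : Set (Finset (Fin (n+1))))
    (C' : Set (Finset (Fin n))) (hC' : C' = proj '' C)
    (σ' : Finset (Fin n)) (hσ' : σ' ∈ simComp C')
    (hnot : iota σ' ∪ {Fin.last n} ∉ simComp C) :
    (∀ ω ∈ link (iota σ') (simComp C), Fin.last n ∉ ω) ∧
    link (iota σ') (simComp C) = iota '' link σ' (simComp C') := by
  have part1 : ∀ ω ∈ link (iota σ') (simComp C), Fin.last n ∉ ω := by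
    rintro ω ⟨hω, hdisj, hun⟩ hlast
    apply hnot
    refine simComp_down C ?_ hun
    intro a ha
    rcases Finset.mem_union.1 ha with h | h
    · exact Finset.mem_union_right _ h
    · rw [Finset.mem_singleton] at h; subst h; exact Finset.mem_union_left _ hlast
  refine ⟨part1, ?_⟩
  ext ω
  constructor
  · intro hmem
    obtain ⟨hω, hdisj, hun⟩ := hmem
    have hlast := part1 ω ⟨hω, hdisj, hun⟩
    refine ⟨proj ω, ⟨?_, ?_, ?_⟩, iota_proj hlast⟩
    · obtain ⟨β, hβ, hsub⟩ := hun
      refine ⟨proj β, by rw [hC']; exact ⟨β, hβ, rfl⟩, ?_⟩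
      intro i hi
      simp only [proj, Finset.mem_filter, Finset.mem_univ, true_and] at hi ⊢
      exact hsub (Finset.mem_union_left _ hi)
    · ext i
      simp only [proj, Finset.mem_inter, Finset.mem_filter, Finset.mem_univ, true_and,
        Finset.notMem_empty, iff_false]
      rintro ⟨h1, h2⟩
      have : Fin.castSucc i ∈ ω ∩ iota σ' :=
        Finset.mem_inter.2 ⟨h1, (mem_iota_iff σ' i).2 h2⟩
      rw [hdisj] at this; exact Finset.notMem_empty _ this
    · obtain ⟨β, hβ, hsub⟩ := hun
      refine ⟨proj β, by rw [hC']; exact ⟨β, hβ, rfl⟩, ?_⟩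
      intro i hi
      simp only [proj, Finset.mem_filter, Finset.mem_univ, true_and]
      rcases Finset.mem_union.1 hi with h | h
      · simp only [proj, Finset.mem_filter, Finset.mem_univ, true_and] at h
        exact hsub (Finset.mem_union_left _ h)
      · exact hsub (Finset.mem_union_right _ ((mem_iota_iff σ' i).2 h))
  · rintro ⟨ω', ⟨hω', hdisj', hun'⟩, rfl⟩
    obtain ⟨τ, hτ, hsub⟩ := hun'
    rw [hC'] at hτ
    obtain ⟨β, hβ, rfl⟩ := hτ
    have key : iota ω' ∪ iota σ' ⊆ β := by
      intro a ha
      rcases Finset.mem_union.1 ha with h | h <;>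
      · simp only [iota, Finset.mem_image] at h
        obtain ⟨i, hi, rfl⟩ := h
        have : i ∈ proj β := hsub (by simp [hi])
        simpa [proj] using this
    refine ⟨simComp_down C Finset.subset_union_left ⟨β, hβ, key⟩, ?_, ⟨β, hβ, key⟩⟩
    rw [iota, iota, ← Finset.image_inter _ _ (Fin.castSucc_injective n), hdisj',
      Finset.image_empty]
end
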